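/- Suppose Σ̃_m ⪰ Σ̃_{m,dn} for all m (the event E_C). Then for any fixed matrix Ū ∈ ℝ^{d²×2k} with orthonormal columns, the total squared prediction error of the minimizers (Ŵ, B̂) of the joint squared loss satisfies: (1/2)·Σ_m ‖X̃_m(W*β*_m − Ŵβ̂_m)‖₂² ≤ sqrt(Σ_m ‖η̃_m'X̃_mŪ‖²_{V̄_m^{-1}}) · sqrt(2 Σ_m ‖X̃_m(W*β*_m − Ŵβ̂_m)‖₂²) + sqrt(Σ_m ‖η̃_m'X̃_mŪ‖²_{V̄_m^{-1}}) · sqrt(2 Σ_m ‖X̃_m(Ū − U)r_m‖²) + Σ_m ⟨η̃_m, X̃_m(U − Ū)r_m⟩, where V̄_m = Ū'Σ̃_mŪ + Ū'Σ̃_{m,dn}Ū, and Ur_m is the factorization of Ŵβ̂_m − W*β*_m with U ∈ ℝ^{d²×2k} orthonormal and r_m ∈ ℝ^{2k}. -/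

import Mathlib

open MeasureTheory Matrix Finset

noncomputable section

namespace JointLTI

/-- Euclidean (ℓ²) norm of a finite real vector. -/
def l2norm {n : Type*} [Fintype n] (v : n → ℝ) : ℝ := Real.sqrt (∑ i, v i ^ 2)

/-- Squared Euclidean norm of a finite real vector. -/
def sqNorm {n : Type*} [Fintype n] (v : n → ℝ) : ℝ := ∑ i, v i ^ 2

/-- ℓ∞ norm of a finite real vector. -/
def supNorm {n : Type*} [Fintype n] (v : n → ℝ) : ℝ := ⨆ i, |v i|

/-- Maximum absolute row sum, i.e. the ℓ∞ → ℓ∞ operator norm, of a complex matrix. -/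
def rowSumNorm {n m : Type*} [Fintype m] (A : Matrix n m ℂ) : ℝ := ⨆ i, ∑ j, ‖A i j‖

/-- The ℓ∞ → ℓ² operator norm of a complex matrix. -/
def infToTwoNorm {n m : Type*} [Fintype n] [Fintype m] (A : Matrix n m ℂ) : ℝ :=
  ⨆ v : {v : m → ℂ // ∀ j, ‖v j‖ ≤ 1},
    Real.sqrt (∑ i, ‖A.mulVec v.1 i‖ ^ 2)

/-- Spectral norm (ℓ² → ℓ² operator norm) of a real matrix. -/
def spectralNorm {n m : Type*} [Fintype n] [Fintype m] (A : Matrix n m ℝ) : ℝ :=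
  ⨆ v : {v : m → ℝ // ∑ i, v i ^ 2 ≤ 1}, l2norm (A.mulVec v.1)

/-- Squared Frobenius norm of a real matrix. -/
def frobSq {n m : Type*} [Fintype n] [Fintype m] (A : Matrix n m ℝ) : ℝ := ∑ i, ∑ j, A i j ^ 2

/-- Frobenius norm of a real matrix. -/
def frobNorm {n m : Type*} [Fintype n] [Fintype m] (A : Matrix n m ℝ) : ℝ :=
  Real.sqrt (frobSq A)

/-- The Jordan block of size `l` for the eigenvalue `lam`:
`lam` on the diagonal, ones on the superdiagonal, zeros elsewhere. -/
def jordanBlock (l : ℕ) (lam : ℂ) : Matrix (Fin l) (Fin l) ℂ :=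
  Matrix.of fun i j =>
    if (j : ℕ) = (i : ℕ) then lam else if (j : ℕ) = (i : ℕ) + 1 then 1 else 0

/-- The data of a block-diagonal Jordan matrix of total dimension `d`:
`q` blocks, of sizes `bs i`, with eigenvalues `ev i`. -/
structure JordanData (d : ℕ) where
  q : ℕ
  bs : Fin q → ℕ
  ev : Fin q → ℂ
  hsum : ∑ i, bs i = d

/-- Starting index of the `i`-th Jordan block. -/
def blockStart {q : ℕ} (bs : Fin q → ℕ) (i : Fin q) : ℕ :=
  ∑ j : Fin q, if (j : ℕ) < (i : ℕ) then bs j else 0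

/-- The block-diagonal Jordan matrix described by `J`: the Jordan blocks
`jordanBlock (J.bs i) (J.ev i)` are laid out consecutively along the diagonal. -/
def JordanData.mat {d : ℕ} (J : JordanData d) : Matrix (Fin d) (Fin d) ℂ :=
  Matrix.of fun a b =>
    ∑ i : Fin J.q,
      if blockStart J.bs i ≤ (a : ℕ) ∧ (a : ℕ) < blockStart J.bs i + J.bs i then
        (if (b : ℕ) = (a : ℕ) then J.ev i
         else if (b : ℕ) = (a : ℕ) + 1 ∧ (a : ℕ) + 1 < blockStart J.bs i + J.bs i then 1
         else 0)
      else 0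

/-- Size of the largest Jordan block. -/
def JordanData.lstar {d : ℕ} (J : JordanData d) : ℕ := Finset.univ.sup J.bs

/-- Magnitude of the largest eigenvalue (the spectral radius). -/
def JordanData.rho1 {d : ℕ} (J : JordanData d) : ℝ := ⨆ i, ‖J.ev i‖

/-- `ξ = ‖P⁻¹‖_{∞→2} ‖P‖_∞`. -/
def xiOf {d : ℕ} (P : Matrix (Fin d) (Fin d) ℂ) : ℝ := infToTwoNorm P⁻¹ * rowSumNorm P

/-- `f(Λ) = e^{1/|λ₁|} [ (l*-1)/(-log |λ₁|) + (l*-1)! / (-log |λ₁|)^{l*} ]`. -/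
def fJordan {d : ℕ} (J : JordanData d) : ℝ :=
  Real.exp (1 / J.rho1) *
    (((J.lstar : ℝ) - 1) / (-Real.log J.rho1) +
      (Nat.factorial (J.lstar - 1) : ℝ) / (-Real.log J.rho1) ^ J.lstar)

/-- `α(A) = ξ f(Λ)` when `|λ₁| < 1`, and `α(A) = ξ e^{ρ+1}` otherwise. -/
def alphaOf {d : ℕ} (P : Matrix (Fin d) (Fin d) ℂ) (J : JordanData d) (ρ : ℝ) : ℝ :=
  if J.rho1 < 1 then xiOf P * fJordan J else xiOf P * Real.exp (ρ + 1)

/-- The covariance upper bound `λ̄` of the covariance bound theorem: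
`α(A)² b̄² T` in the stable case and `α(A)² b̄² T^{2l*+1}` otherwise. -/
def lamBarOf {d : ℕ} (P : Matrix (Fin d) (Fin d) ℂ) (J : JordanData d) (ρ bbar : ℝ)
    (T : ℕ) : ℝ :=
  alphaOf P J ρ ^ 2 * bbar ^ 2 *
    (if J.rho1 < 1 then (T : ℝ) else (T : ℝ) ^ (2 * J.lstar + 1))

/-- Loewner partial order on real symmetric matrices: `A ⪯ B` iff `B - A` is
positive semidefinite. -/
def loewnerLE {n : Type*} [Fintype n] (A B : Matrix n n ℝ) : Prop := (B - A).PosSemidef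

/-- Smallest eigenvalue of a symmetric real matrix (infimum of the Rayleigh quotient). -/
def minEig {d : ℕ} (C : Matrix (Fin d) (Fin d) ℝ) : ℝ :=
  ⨅ u : {u : Fin d → ℝ // ∑ i, u i ^ 2 = 1}, u.1 ⬝ᵥ C.mulVec u.1

/-- Largest eigenvalue of a symmetric real matrix (supremum of the Rayleigh quotient). -/
def maxEig {d : ℕ} (C : Matrix (Fin d) (Fin d) ℝ) : ℝ :=
  ⨆ u : {u : Fin d → ℝ // ∑ i, u i ^ 2 = 1}, u.1 ⬝ᵥ C.mulVec u.1

open scoped Classical in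
/-- Inverse of the positive semidefinite square root of a matrix. -/
def matSqrtInv {d : ℕ} (A : Matrix (Fin d) (Fin d) ℝ) : Matrix (Fin d) (Fin d) ℝ :=
  if h : A.PosSemidef then
    ((h.1.eigenvectorUnitary : Matrix (Fin d) (Fin d) ℝ) *
      diagonal ((↑) ∘ (√·) ∘ h.1.eigenvalues) *
      (star h.1.eigenvectorUnitary : Matrix (Fin d) (Fin d) ℝ))⁻¹ else 0

/-- Sample covariance matrix `Σ = ∑_{t=0}^{T-1} x(t) x(t)'`. -/
def sampleCov {d : ℕ} (T : ℕ) (xv : ℕ → Fin d → ℝ) : Matrix (Fin d) (Fin d) ℝ :=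
  ∑ t ∈ Finset.range T, vecMulVec (xv t) (xv t)

/-- `b_T(δ) = sqrt(2σ² log(2dMT/δ))`. -/
def bT (d M T : ℕ) (σ δ : ℝ) : ℝ :=
  Real.sqrt (2 * σ ^ 2 * Real.log (2 * d * M * T / δ))

/-- The vectorized design matrix `X̃ ∈ ℝ^{Td × d²}`: its row `(t,j)` is the vector
`x̃_j(t)` which carries `x(t)` in the `j`-th size-`d` block and zeros elsewhere. -/
def designMat {d : ℕ} (T : ℕ) (xv : ℕ → Fin d → ℝ) :
    Matrix (Fin T × Fin d) (Fin d × Fin d) ℝ :=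
  Matrix.of fun p q => if q.1 = p.2 then xv (p.1 : ℕ) q.2 else 0

/-- The stacked noise vector `η̃ ∈ ℝ^{Td}`, concatenating `η(1),…,η(T)`. -/
def noiseStack {d : ℕ} (T : ℕ) (e : ℕ → Fin d → ℝ) : Fin T × Fin d → ℝ :=
  fun p => e ((p.1 : ℕ) + 1) p.2

/-- The noise processes `η_m` are adapted to `ℱ`, and are mean-zero, conditionally
`σ`-sub-Gaussian martingale differences. -/
def SubGaussianMDS {Ω : Type*} [mΩ : MeasurableSpace Ω] (μ : Measure Ω)
    (ℱ : Filtration ℕ mΩ) {d M : ℕ} (η : Fin M → ℕ → Ω → Fin d → ℝ) (σ : ℝ) : Prop :=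
  (∀ m t i, StronglyMeasurable[ℱ t] fun ω => η m t ω i) ∧
  (∀ m t i, μ[fun ω => η m (t + 1) ω i | ℱ t] =ᵐ[μ] 0) ∧
  (∀ m t (l : Fin d → ℝ),
    μ[fun ω => Real.exp (∑ i, l i * η m (t + 1) ω i) | ℱ t]
      ≤ᵐ[μ] fun _ => Real.exp ((∑ i, l i ^ 2) * σ ^ 2 / 2))

/-- The noise processes have conditional covariance `C`. -/
def CondCov {Ω : Type*} [mΩ : MeasurableSpace Ω] (μ : Measure Ω)
    (ℱ : Filtration ℕ mΩ) {d M : ℕ} (η : Fin M → ℕ → Ω → Fin d → ℝ)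
    (C : Matrix (Fin d) (Fin d) ℝ) : Prop :=
  ∀ m t i j, μ[fun ω => η m (t + 1) ω i * η m (t + 1) ω j | ℱ t] =ᵐ[μ] fun _ => C i j

/-! Since `(Ŵ, B̂)` has loss at most that of `(W*, B*)`, expanding the squares gives the basic
inequality `Σ ‖X̃_m Δ_m‖² ≤ 2 Σ ⟨η̃_m, X̃_m U r_m⟩`. Writing `U = Ū + (U - Ū)`, the `Ū`-part is
`Σ ⟨Ū'X̃_m'η̃_m, r_m⟩`, which Cauchy–Schwarz in the inner products of the `V̄_m` bounds by
`sqrt (Σ ‖Ū'X̃_m'η̃_m‖²_{V̄_m⁻¹}) · sqrt (Σ r_m'V̄_m r_m)`. On `E_C`, orthonormality of `Ū` gives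
`r'V̄_m r ≤ 2 ‖X̃_m Ū r‖²`, and `Ū r_m = U r_m + (Ū - U) r_m` with the triangle inequality splits
this into the two prediction terms. -/

section

variable {ι ρ κ σ : Type*} [Fintype ι] [Fintype ρ] [Fintype κ]

lemma sqNorm_eq_dotProduct (v : ρ → ℝ) : sqNorm v = v ⬝ᵥ v := by
  simp only [sqNorm, dotProduct, sq]

lemma sqNorm_neg (v : ρ → ℝ) : sqNorm (-v) = sqNorm v := by
  simp only [sqNorm, Pi.neg_apply, neg_sq]

lemma sqNorm_add (v w : ρ → ℝ) : sqNorm (v + w) = sqNorm v + 2 * (v ⬝ᵥ w) + sqNorm w := by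
  simp only [sqNorm_eq_dotProduct, add_dotProduct, dotProduct_add, dotProduct_comm w v]
  ring

lemma sqNorm_mulVec (X : Matrix ρ κ ℝ) (w : κ → ℝ) :
    sqNorm (X *ᵥ w) = w ⬝ᵥ (Xᵀ * X) *ᵥ w := by
  rw [sqNorm_eq_dotProduct, ← mulVec_mulVec, dotProduct_mulVec w, vecMul_transpose,
    dotProduct_comm]

lemma sqrt_sum_sq_add_le (f g : ρ → ℝ) :
    √(∑ i, (f i + g i) ^ 2) ≤ √(∑ i, f i ^ 2) + √(∑ i, g i ^ 2) := by
  simpa [EuclideanSpace.norm_eq] using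
    norm_add_le (WithLp.toLp 2 f : EuclideanSpace ℝ ρ) (WithLp.toLp 2 g)

lemma sqrt_sum_sqNorm_add_le (f g : ι → ρ → ℝ) :
    √(∑ m, sqNorm (f m + g m)) ≤ √(∑ m, sqNorm (f m)) + √(∑ m, sqNorm (g m)) := by
  simp only [sqNorm, Pi.add_apply, ← Fintype.sum_prod_type']
  exact sqrt_sum_sq_add_le (fun z : ι × ρ => f z.1 z.2) (fun z => g z.1 z.2)

lemma dotProduct_mulVec_le_sqrt_mul_sqrt {M : Matrix ρ ρ ℝ} (hM : M.PosSemidef)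
    (a b : ρ → ℝ) :
    a ⬝ᵥ M *ᵥ b ≤ √(a ⬝ᵥ M *ᵥ a) * √(b ⬝ᵥ M *ᵥ b) := by
  let _ := M.toSeminormedAddCommGroup hM
  let _ := M.toInnerProductSpace hM
  have hinner : ∀ v w : ρ → ℝ, inner ℝ v w = v ⬝ᵥ M *ᵥ w := fun _ _ => dotProduct_comm _ _
  have h := real_inner_mul_inner_self_le a b
  simp only [hinner] at h
  rw [← Real.sqrt_mul (by simpa using hM.dotProduct_mulVec_nonneg a)]
  exact Real.le_sqrt_of_sq_le (by nlinarith)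

lemma dotProduct_le_sqrt_inv_mul_sqrt [DecidableEq ρ] {V : Matrix ρ ρ ℝ} (hV : V.PosDef)
    (v r : ρ → ℝ) : v ⬝ᵥ r ≤ √(v ⬝ᵥ V⁻¹ *ᵥ v) * √(r ⬝ᵥ V *ᵥ r) := by
  have hVV : V * V⁻¹ = 1 := mul_nonsing_inv V hV.det_pos.ne'.isUnit
  have hcross : (V⁻¹ *ᵥ v) ⬝ᵥ V *ᵥ r = v ⬝ᵥ r := by
    have hsymm : Vᵀ = V := hV.isHermitian
    rw [dotProduct_mulVec, ← mulVec_transpose, hsymm, mulVec_mulVec, hVV, one_mulVec]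
  have hquad : (V⁻¹ *ᵥ v) ⬝ᵥ V *ᵥ (V⁻¹ *ᵥ v) = v ⬝ᵥ V⁻¹ *ᵥ v := by
    rw [mulVec_mulVec, hVV, one_mulVec, dotProduct_comm]
  simpa only [hcross, hquad] using dotProduct_mulVec_le_sqrt_mul_sqrt hV.posSemidef (V⁻¹ *ᵥ v) r

lemma mul_sqNorm_le_sqNorm_mulVec [DecidableEq κ] {X : Matrix ρ κ ℝ} {lam : ℝ}
    (hX : loewnerLE (lam • (1 : Matrix κ κ ℝ)) (Xᵀ * X)) (u : κ → ℝ) :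
    lam * sqNorm u ≤ sqNorm (X *ᵥ u) := by
  have h := hX.dotProduct_mulVec_nonneg u
  simp only [star_trivial, sub_mulVec, smul_mulVec, one_mulVec, dotProduct_sub, dotProduct_smul,
    smul_eq_mul, sub_nonneg] at h
  rwa [sqNorm_eq_dotProduct, sqNorm_mulVec]

/-- The matrix `V̄_m` of the paper, for `Σ̃_m = X'X` and `Σ̃_{m,dn} = lam • 1`. -/
def regGram [DecidableEq κ] (X : Matrix ρ κ ℝ) (Ubar : Matrix κ σ ℝ) (lam : ℝ) : Matrix σ σ ℝ :=
  Ubarᵀ * (Xᵀ * X) * Ubar + Ubarᵀ * (lam • (1 : Matrix κ κ ℝ)) * Ubar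

section regGram

variable [DecidableEq κ] [DecidableEq σ] {X : Matrix ρ κ ℝ} {Ubar : Matrix κ σ ℝ} {lam : ℝ}

lemma regGram_eq (hUbar : Ubarᵀ * Ubar = 1) :
    regGram X Ubar lam = (X * Ubar)ᵀ * (X * Ubar) + lam • 1 := by
  rw [regGram, Matrix.mul_smul, Matrix.smul_mul, Matrix.mul_one, hUbar, transpose_mul,
    Matrix.mul_assoc, Matrix.mul_assoc, Matrix.mul_assoc]

variable [Fintype σ]

lemma posDef_regGram (hUbar : Ubarᵀ * Ubar = 1) (hlam : 0 < lam) :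
    (regGram X Ubar lam).PosDef := by
  rw [regGram_eq hUbar]
  exact PosDef.posSemidef_add (by simpa using posSemidef_conjTranspose_mul_self (X * Ubar))
    (PosDef.one.smul hlam)

lemma dotProduct_regGram_mulVec_le (hUbar : Ubarᵀ * Ubar = 1)
    (hX : loewnerLE (lam • (1 : Matrix κ κ ℝ)) (Xᵀ * X)) (r : σ → ℝ) :
    r ⬝ᵥ regGram X Ubar lam *ᵥ r ≤ 2 * sqNorm (X *ᵥ (Ubar *ᵥ r)) := by
  have hnorm : sqNorm (Ubar *ᵥ r) = r ⬝ᵥ r := by rw [sqNorm_mulVec, hUbar, one_mulVec]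
  have hquad : r ⬝ᵥ regGram X Ubar lam *ᵥ r = sqNorm (X *ᵥ (Ubar *ᵥ r)) + lam * (r ⬝ᵥ r) := by
    rw [regGram_eq hUbar, add_mulVec, dotProduct_add, ← sqNorm_mulVec, mulVec_mulVec,
      smul_mulVec, one_mulVec, dotProduct_smul, smul_eq_mul]
  have h := mul_sqNorm_le_sqNorm_mulVec hX (Ubar *ᵥ r)
  rw [hnorm] at h
  linarith

lemma sum_dotProduct_le_sqrt_mul_sqrt_regGram {X : ι → Matrix ρ κ ℝ}
    (hUbar : Ubarᵀ * Ubar = 1) (hlam : 0 < lam)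
    (hX : ∀ m, loewnerLE (lam • (1 : Matrix κ κ ℝ)) ((X m)ᵀ * X m)) (v r : ι → σ → ℝ) :
    ∑ m, v m ⬝ᵥ r m ≤ √(∑ m, v m ⬝ᵥ (regGram (X m) Ubar lam)⁻¹ *ᵥ v m) *
      √(2 * ∑ m, sqNorm (X m *ᵥ (Ubar *ᵥ r m))) := by
  have hV m : (regGram (X m) Ubar lam).PosDef := posDef_regGram hUbar hlam
  calc ∑ m, v m ⬝ᵥ r m
      ≤ ∑ m, √(v m ⬝ᵥ (regGram (X m) Ubar lam)⁻¹ *ᵥ v m) *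
          √(r m ⬝ᵥ regGram (X m) Ubar lam *ᵥ r m) :=
        sum_le_sum fun m _ => dotProduct_le_sqrt_inv_mul_sqrt (hV m) (v m) (r m)
    _ ≤ √(∑ m, v m ⬝ᵥ (regGram (X m) Ubar lam)⁻¹ *ᵥ v m) *
          √(∑ m, r m ⬝ᵥ regGram (X m) Ubar lam *ᵥ r m) :=
        Real.sum_sqrt_mul_sqrt_le _
          (fun m => by simpa using (hV m).inv.posSemidef.dotProduct_mulVec_nonneg (v m))
          (fun m => by simpa using (hV m).posSemidef.dotProduct_mulVec_nonneg (r m))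
    _ ≤ _ := by
      rw [mul_sum]
      gcongr with m
      exact dotProduct_regGram_mulVec_le hUbar (hX m) (r m)

end regGram

theorem basic_inequality (X : ι → Matrix ρ κ ℝ) {θ θh : ι → κ → ℝ} {y η : ι → ρ → ℝ}
    (hy : ∀ m, y m = X m *ᵥ θ m + η m)
    (hopt : ∑ m, sqNorm (y m - X m *ᵥ θh m) ≤ ∑ m, sqNorm (y m - X m *ᵥ θ m)) :
    ∑ m, sqNorm (X m *ᵥ (θ m - θh m)) ≤ 2 * ∑ m, η m ⬝ᵥ X m *ᵥ (θh m - θ m) := by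
  have hres m : y m - X m *ᵥ θh m = η m + X m *ᵥ (θ m - θh m) := by
    rw [hy, mulVec_sub]; abel
  have hcross m : η m ⬝ᵥ X m *ᵥ (θ m - θh m) = -(η m ⬝ᵥ X m *ᵥ (θh m - θ m)) := by
    rw [← dotProduct_neg, ← mulVec_neg, neg_sub]
  have hres₀ m : y m - X m *ᵥ θ m = η m := by rw [hy, add_sub_cancel_left]
  simp only [hres, hres₀, sqNorm_add, hcross, mul_neg, sum_neg_distrib, sum_add_distrib,
    ← mul_sum] at hopt
  linarith

theorem prediction_error_decomposition_of_loss_le [DecidableEq κ] [DecidableEq σ] [Fintype σ]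
    (X : ι → Matrix ρ κ ℝ) {θ θh : ι → κ → ℝ} {y η : ι → ρ → ℝ}
    (hy : ∀ m, y m = X m *ᵥ θ m + η m)
    (hopt : ∑ m, sqNorm (y m - X m *ᵥ θh m) ≤ ∑ m, sqNorm (y m - X m *ᵥ θ m))
    {U Ubar : Matrix κ σ ℝ} {r : ι → σ → ℝ} (hfact : ∀ m, θh m - θ m = U *ᵥ r m)
    (hUbar : Ubarᵀ * Ubar = 1) {lam : ℝ} (hlam : 0 < lam)
    (hX : ∀ m, loewnerLE (lam • (1 : Matrix κ κ ℝ)) ((X m)ᵀ * X m)) :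
    1 / 2 * ∑ m, sqNorm (X m *ᵥ (θ m - θh m)) ≤
      √(∑ m, Ubarᵀ *ᵥ ((X m)ᵀ *ᵥ η m) ⬝ᵥ
          (regGram (X m) Ubar lam)⁻¹ *ᵥ (Ubarᵀ *ᵥ ((X m)ᵀ *ᵥ η m))) *
        √(2 * ∑ m, sqNorm (X m *ᵥ (θ m - θh m))) +
      √(∑ m, Ubarᵀ *ᵥ ((X m)ᵀ *ᵥ η m) ⬝ᵥ
          (regGram (X m) Ubar lam)⁻¹ *ᵥ (Ubarᵀ *ᵥ ((X m)ᵀ *ᵥ η m))) *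
        √(2 * ∑ m, sqNorm (X m *ᵥ ((Ubar - U) *ᵥ r m))) +
      ∑ m, η m ⬝ᵥ X m *ᵥ ((U - Ubar) *ᵥ r m) := by
  set S := √(∑ m, Ubarᵀ *ᵥ ((X m)ᵀ *ᵥ η m) ⬝ᵥ
    (regGram (X m) Ubar lam)⁻¹ *ᵥ (Ubarᵀ *ᵥ ((X m)ᵀ *ᵥ η m)))
  have hbasic := basic_inequality X hy hopt
  have hsplit m : η m ⬝ᵥ X m *ᵥ (θh m - θ m) =
      Ubarᵀ *ᵥ ((X m)ᵀ *ᵥ η m) ⬝ᵥ r m + η m ⬝ᵥ X m *ᵥ ((U - Ubar) *ᵥ r m) := by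
    rw [hfact, ← add_sub_cancel Ubar U, add_mulVec, mulVec_add, dotProduct_add,
      add_sub_cancel_left, dotProduct_mulVec, dotProduct_mulVec, mulVec_transpose,
      mulVec_transpose]
  have hproj m : X m *ᵥ (Ubar *ᵥ r m) =
      -(X m *ᵥ (θ m - θh m)) + X m *ᵥ ((Ubar - U) *ᵥ r m) := by
    rw [← mulVec_neg, neg_sub, hfact, ← mulVec_add, ← add_mulVec, add_sub_cancel]
  have htri : √(2 * ∑ m, sqNorm (X m *ᵥ (Ubar *ᵥ r m))) ≤
      √(2 * ∑ m, sqNorm (X m *ᵥ (θ m - θh m))) +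
        √(2 * ∑ m, sqNorm (X m *ᵥ ((Ubar - U) *ᵥ r m))) := by
    simp only [Real.sqrt_mul zero_le_two, ← mul_add]
    gcongr
    simp only [hproj]
    simpa only [sqNorm_neg] using sqrt_sum_sqNorm_add_le (fun m => -(X m *ᵥ (θ m - θh m)))
      fun m => X m *ᵥ ((Ubar - U) *ᵥ r m)
  calc 1 / 2 * ∑ m, sqNorm (X m *ᵥ (θ m - θh m))
      ≤ ∑ m, Ubarᵀ *ᵥ ((X m)ᵀ *ᵥ η m) ⬝ᵥ r m + ∑ m, η m ⬝ᵥ X m *ᵥ ((U - Ubar) *ᵥ r m) := by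
        simp only [hsplit, sum_add_distrib] at hbasic
        linarith
    _ ≤ S * √(2 * ∑ m, sqNorm (X m *ᵥ (Ubar *ᵥ r m))) +
          ∑ m, η m ⬝ᵥ X m *ᵥ ((U - Ubar) *ᵥ r m) := by
        gcongr
        exact sum_dotProduct_le_sqrt_mul_sqrt_regGram hUbar hlam hX _ r
    _ ≤ S * (√(2 * ∑ m, sqNorm (X m *ᵥ (θ m - θh m))) +
          √(2 * ∑ m, sqNorm (X m *ᵥ ((Ubar - U) *ᵥ r m)))) +
          ∑ m, η m ⬝ᵥ X m *ᵥ ((U - Ubar) *ᵥ r m) := by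
        gcongr
    _ = _ := by ring

end

lemma designMat_mulVec_apply {d T : ℕ} (xv : ℕ → Fin d → ℝ) (a : Fin d × Fin d → ℝ)
    (p : Fin T × Fin d) : (designMat T xv *ᵥ a) p = ∑ i, xv p.1 i * a (p.2, i) := by
  simp only [designMat, mulVec, dotProduct, of_apply, Fintype.sum_prod_type_right, ite_mul,
    zero_mul, sum_ite_eq', mem_univ, if_true]

lemma nextStates_eq_designMat_mulVec_add_noiseStack {d T : ℕ} {A : Matrix (Fin d) (Fin d) ℝ}
    {x η : ℕ → Fin d → ℝ} (hdyn : ∀ t < T, x (t + 1) = A *ᵥ x t + η (t + 1))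
    {a : Fin d × Fin d → ℝ} (ha : ∀ j i, A j i = a (j, i)) :
    (fun p : Fin T × Fin d => x (p.1 + 1) p.2) = designMat T x *ᵥ a + noiseStack T η := by
  ext p
  rw [hdyn p.1 p.1.isLt, Pi.add_apply, Pi.add_apply, designMat_mulVec_apply]
  simp only [mulVec, dotProduct, ha, noiseStack, mul_comm]

lemma minEig_pos {d : ℕ} (hd : 0 < d) {C : Matrix (Fin d) (Fin d) ℝ} (hC : C.PosDef) :
    0 < minEig C := by
  have : Nonempty (Fin d) := ⟨⟨0, hd⟩⟩
  have hsphere (u : EuclideanSpace ℝ (Fin d)) : u ∈ Metric.sphere 0 1 ↔ ∑ i, u i ^ 2 = 1 := by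
    rw [mem_sphere_zero_iff_norm, EuclideanSpace.norm_eq, Real.sqrt_eq_one]
    simp only [Real.norm_eq_abs, sq_abs]
  have hq : Continuous fun u : EuclideanSpace ℝ (Fin d) => u.ofLp ⬝ᵥ C *ᵥ u.ofLp := by fun_prop
  obtain ⟨u₀, hu₀, hmin⟩ := (isCompact_sphere (0 : EuclideanSpace ℝ (Fin d)) 1).exists_isMinOn
    (NormedSpace.sphere_nonempty.2 zero_le_one) hq.continuousOn
  have hu₀' := (hsphere u₀).1 hu₀
  have : Nonempty {u : Fin d → ℝ // ∑ i, u i ^ 2 = 1} := ⟨⟨u₀.ofLp, hu₀'⟩⟩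
  calc 0 < u₀.ofLp ⬝ᵥ C *ᵥ u₀.ofLp := by
        simpa using hC.dotProduct_mulVec_pos fun h => by simp [h] at hu₀'
    _ ≤ minEig C := le_ciInf fun u => hmin ((hsphere (WithLp.toLp 2 u.1)).2 u.2)

theorem prediction_error_decomposition_general
    (d M T k : ℕ)
    (C : Matrix (Fin d) (Fin d) ℝ) (hC : C.PosDef)
    (A : Fin M → Matrix (Fin d) (Fin d) ℝ)
    (x η : Fin M → ℕ → Fin d → ℝ)
    -- dynamics for t = 0, …, T − 1
    (hdyn : ∀ m, ∀ t < T, x m (t + 1) = (A m).mulVec (x m t) + η m (t + 1))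
    -- shared-basis assumption, in vectorized form `Ã_m = W* β*_m`
    (Wstar : Matrix (Fin d × Fin d) (Fin k) ℝ) (βstar : Fin M → Fin k → ℝ)
    (hshared : ∀ m j i, A m j i = Wstar.mulVec (βstar m) (j, i))
    -- the joint estimator minimizes the squared loss
    (Wh : Matrix (Fin d × Fin d) (Fin k) ℝ) (bh : Fin M → Fin k → ℝ)
    (hopt : ∀ (W : Matrix (Fin d × Fin d) (Fin k) ℝ) (β : Fin M → Fin k → ℝ),
      ∑ m, sqNorm ((fun p : Fin T × Fin d => x m ((p.1 : ℕ) + 1) p.2) -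
          (designMat T (x m)).mulVec (Wh.mulVec (bh m))) ≤
        ∑ m, sqNorm ((fun p : Fin T × Fin d => x m ((p.1 : ℕ) + 1) p.2) -
          (designMat T (x m)).mulVec (W.mulVec (β m))))
    -- rank-2k factorization `Ŵ B̂ − W* B* = U R`
    (U : Matrix (Fin d × Fin d) (Fin (2 * k)) ℝ)
    (r : Fin M → Fin (2 * k) → ℝ)
    (hfact : ∀ m, Wh.mulVec (bh m) - Wstar.mulVec (βstar m) = U.mulVec (r m))
    -- a fixed orthonormal matrix Ū
    (Ubar : Matrix (Fin d × Fin d) (Fin (2 * k)) ℝ) (hUbar : Ubarᵀ * Ubar = 1)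
    -- the event `E_C` : `Σ̃_m ⪰ Σ̃_{m,dn}`
    (hEC : ∀ m, loewnerLE
      ((minEig C * T / 4) • (1 : Matrix (Fin d × Fin d) (Fin d × Fin d) ℝ))
      ((designMat T (x m))ᵀ * designMat T (x m))) :
    1 / 2 * ∑ m, sqNorm
        ((designMat T (x m)).mulVec (Wstar.mulVec (βstar m) - Wh.mulVec (bh m))) ≤
      Real.sqrt (∑ m,
          Ubarᵀ.mulVec ((designMat T (x m))ᵀ.mulVec (noiseStack T (η m))) ⬝ᵥ
            (Ubarᵀ * ((designMat T (x m))ᵀ * designMat T (x m)) * Ubar +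
              Ubarᵀ * ((minEig C * T / 4) •
                (1 : Matrix (Fin d × Fin d) (Fin d × Fin d) ℝ)) * Ubar)⁻¹.mulVec
              (Ubarᵀ.mulVec ((designMat T (x m))ᵀ.mulVec (noiseStack T (η m))))) *
        Real.sqrt (2 * ∑ m, sqNorm
          ((designMat T (x m)).mulVec (Wstar.mulVec (βstar m) - Wh.mulVec (bh m)))) +
      Real.sqrt (∑ m,
          Ubarᵀ.mulVec ((designMat T (x m))ᵀ.mulVec (noiseStack T (η m))) ⬝ᵥ
            (Ubarᵀ * ((designMat T (x m))ᵀ * designMat T (x m)) * Ubar +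
              Ubarᵀ * ((minEig C * T / 4) •
                (1 : Matrix (Fin d × Fin d) (Fin d × Fin d) ℝ)) * Ubar)⁻¹.mulVec
              (Ubarᵀ.mulVec ((designMat T (x m))ᵀ.mulVec (noiseStack T (η m))))) *
        Real.sqrt (2 * ∑ m, sqNorm
          ((designMat T (x m)).mulVec ((Ubar - U).mulVec (r m)))) +
      ∑ m, noiseStack T (η m) ⬝ᵥ
        (designMat T (x m)).mulVec ((U - Ubar).mulVec (r m)) := by
  -- Without data rows everything vanishes; otherwise `λ̲ > 0`, so every `V̄_m` is invertible.
  by_cases hrows : IsEmpty (Fin T × Fin d)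
  · simp [sqNorm, dotProduct]
  obtain ⟨⟨t, j⟩⟩ := not_isEmpty_iff.mp hrows
  have hlam : 0 < minEig C * T / 4 := by
    have := minEig_pos j.pos hC
    have : (0 : ℝ) < T := Nat.cast_pos.2 t.pos
    positivity
  exact prediction_error_decomposition_of_loss_le (fun m => designMat T (x m))
    (fun m => nextStates_eq_designMat_mulVec_add_noiseStack (hdyn m) (hshared m))
    (hopt Wstar βstar) hfact hUbar hlam hEC

/-- Prediction error decomposition: on the event `E_C`
(`Σ̃_m ⪰ Σ̃_{m,dn}` for all `m`), for any fixed orthonormal `Ū ∈ ℝ^{d²×2k}`, the total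
squared prediction error of the minimizers `(Ŵ, B̂)` of the joint squared loss satisfies
the three-term decomposition of Lemma 2. -/
theorem prediction_error_decomposition
    (d M T k : ℕ)
    (C : Matrix (Fin d) (Fin d) ℝ) (hC : C.PosDef)
    (A : Fin M → Matrix (Fin d) (Fin d) ℝ)
    (x η : Fin M → ℕ → Fin d → ℝ)
    -- dynamics for t = 0, …, T − 1
    (hdyn : ∀ m, ∀ t < T, x m (t + 1) = (A m).mulVec (x m t) + η m (t + 1))
    -- shared-basis assumption, in vectorized form `Ã_m = W* β*_m`
    (Wstar : Matrix (Fin d × Fin d) (Fin k) ℝ) (βstar : Fin M → Fin k → ℝ)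
    (hshared : ∀ m j i, A m j i = Wstar.mulVec (βstar m) (j, i))
    -- the joint estimator minimizes the squared loss
    (Wh : Matrix (Fin d × Fin d) (Fin k) ℝ) (bh : Fin M → Fin k → ℝ)
    (hopt : ∀ (W : Matrix (Fin d × Fin d) (Fin k) ℝ) (β : Fin M → Fin k → ℝ),
      ∑ m, sqNorm ((fun p : Fin T × Fin d => x m ((p.1 : ℕ) + 1) p.2) -
          (designMat T (x m)).mulVec (Wh.mulVec (bh m))) ≤
        ∑ m, sqNorm ((fun p : Fin T × Fin d => x m ((p.1 : ℕ) + 1) p.2) -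
          (designMat T (x m)).mulVec (W.mulVec (β m))))
    -- rank-2k factorization `Ŵ B̂ − W* B* = U R`
    (U : Matrix (Fin d × Fin d) (Fin (2 * k)) ℝ) (hU : Uᵀ * U = 1)
    (r : Fin M → Fin (2 * k) → ℝ)
    (hfact : ∀ m, Wh.mulVec (bh m) - Wstar.mulVec (βstar m) = U.mulVec (r m))
    -- a fixed orthonormal matrix Ū
    (Ubar : Matrix (Fin d × Fin d) (Fin (2 * k)) ℝ) (hUbar : Ubarᵀ * Ubar = 1)
    -- the event `E_C` : `Σ̃_m ⪰ Σ̃_{m,dn}`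
    (hEC : ∀ m, loewnerLE
      ((minEig C * T / 4) • (1 : Matrix (Fin d × Fin d) (Fin d × Fin d) ℝ))
      ((designMat T (x m))ᵀ * designMat T (x m))) :
    1 / 2 * ∑ m, sqNorm
        ((designMat T (x m)).mulVec (Wstar.mulVec (βstar m) - Wh.mulVec (bh m))) ≤
      Real.sqrt (∑ m,
          Ubarᵀ.mulVec ((designMat T (x m))ᵀ.mulVec (noiseStack T (η m))) ⬝ᵥ
            (Ubarᵀ * ((designMat T (x m))ᵀ * designMat T (x m)) * Ubar +
              Ubarᵀ * ((minEig C * T / 4) •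
                (1 : Matrix (Fin d × Fin d) (Fin d × Fin d) ℝ)) * Ubar)⁻¹.mulVec
              (Ubarᵀ.mulVec ((designMat T (x m))ᵀ.mulVec (noiseStack T (η m))))) *
        Real.sqrt (2 * ∑ m, sqNorm
          ((designMat T (x m)).mulVec (Wstar.mulVec (βstar m) - Wh.mulVec (bh m)))) +
      Real.sqrt (∑ m,
          Ubarᵀ.mulVec ((designMat T (x m))ᵀ.mulVec (noiseStack T (η m))) ⬝ᵥ
            (Ubarᵀ * ((designMat T (x m))ᵀ * designMat T (x m)) * Ubar +
              Ubarᵀ * ((minEig C * T / 4) •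
                (1 : Matrix (Fin d × Fin d) (Fin d × Fin d) ℝ)) * Ubar)⁻¹.mulVec
              (Ubarᵀ.mulVec ((designMat T (x m))ᵀ.mulVec (noiseStack T (η m))))) *
        Real.sqrt (2 * ∑ m, sqNorm
          ((designMat T (x m)).mulVec ((Ubar - U).mulVec (r m)))) +
      ∑ m, noiseStack T (η m) ⬝ᵥ
        (designMat T (x m)).mulVec ((U - Ubar).mulVec (r m)) :=
  prediction_error_decomposition_general d M T k C hC A x η hdyn Wstar βstar hshared Wh bh hopt U r
    hfact Ubar hUbar hEC

end JointLTI
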